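/- arXiv:2604.05786 — 2 statements merged into one kernel-verified Lean document; each statement's English description precedes it below -/
import Mathlib

section
/- Let w be a real number with 0 ≤ w < 1/2, let L₁ and L₂ be lines (one-dimensional affine subspaces) in ℝ², and let γ ∈ [0, π/2] be the angle between the direction of L₁ and the direction of L₂. If p, q ∈ ℝ² satisfy dist(p, q) = 1 and each of p and q lies within distance w of L₁ and within distance w of L₂, then γ ≤ 2·arcsin(2w) (equivalently, sin(γ/2) ≤ 2w). -/
/-!
Let `v = q - p`, a unit vector. Since `p` and `q` both lie within `w` of the line `Lᵢ`, the
vector `v` lies within `2w` of the direction of `Lᵢ`, so the angle between `v` and the line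
`Lᵢ` has sine at most `2w`: after possibly flipping the direction vector `dᵢ`, the angle
between `dᵢ` and `v` is at most `arcsin (2w)`. The triangle inequality for angles then bounds
the angle between the two (flipped) direction vectors, and hence `γ`, by `2 arcsin (2w)`.
-/

noncomputable section

open Real

/-- The Euclidean plane. -/
abbrev E2 := EuclideanSpace ℝ (Fin 2)

open InnerProductGeometry Metric
open scoped RealInnerProductSpace

section Angle

variable {V : Type*} [NormedAddCommGroup V] [InnerProductSpace ℝ V]

lemma norm_mul_sin_angle_le_norm_sub_smul (v : V) {u : V} (hu : ‖u‖ = 1) (c : ℝ) :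
    ‖v‖ * sin (angle v u) ≤ ‖v - c • u‖ := by
  have hcos : ‖v‖ * cos (angle v u) = ⟪v, u⟫ := by
    simpa [hu, mul_comm] using cos_angle_mul_norm_mul_norm v u
  have hexpand : ‖v - c • u‖ ^ 2 = ‖v‖ ^ 2 - 2 * c * ⟪v, u⟫ + c ^ 2 := by
    rw [norm_sub_sq_real, norm_smul, real_inner_smul_right, hu, Real.norm_eq_abs, mul_one,
      sq_abs]
    ring
  refine (pow_le_pow_iff_left₀ (mul_nonneg (norm_nonneg v) (sin_angle_nonneg v u))
    (norm_nonneg _) two_ne_zero).1 ?_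
  -- the difference of the two sides is `(c - ‖v‖ cos (angle v u))²`
  rw [hexpand, mul_pow, sin_sq, ← hcos]
  nlinarith [sq_nonneg (c - ‖v‖ * cos (angle v u))]

lemma norm_mul_sin_angle_le_infDist_span_singleton (v : V) {d : V} (hd : d ≠ 0) :
    ‖v‖ * sin (angle v d) ≤ infDist v (ℝ ∙ d) := by
  rw [le_infDist ⟨0, Submodule.zero_mem _⟩]
  rintro _ hy
  obtain ⟨c, rfl⟩ := Submodule.mem_span_singleton.1 hy
  have hd' : ‖d‖ ≠ 0 := norm_ne_zero_iff.2 hd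
  have hcd : c • d = (c * ‖d‖) • (‖d‖⁻¹ • d) := by
    rw [smul_smul, mul_assoc, mul_inv_cancel₀ hd', mul_one]
  rw [dist_eq_norm, ← angle_smul_right_of_pos v d (inv_pos.2 (norm_pos_iff.2 hd)), hcd]
  exact norm_mul_sin_angle_le_norm_sub_smul v (norm_smul_inv_norm hd) _

lemma le_arcsin_or_pi_sub_le_arcsin_of_sin_le {θ t : ℝ} (h0 : 0 ≤ θ) (hπ : θ ≤ π)
    (h : sin θ ≤ t) : θ ≤ arcsin t ∨ π - θ ≤ arcsin t := by
  rcases le_total θ (π / 2) with hθ | hθ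
  · left
    calc θ = arcsin (sin θ) := (arcsin_sin (by linarith [pi_pos]) hθ).symm
      _ ≤ arcsin t := monotone_arcsin h
  · right
    calc π - θ = arcsin (sin (π - θ)) := (arcsin_sin (by linarith) (by linarith)).symm
      _ ≤ arcsin t := monotone_arcsin (by rwa [sin_pi_sub])

lemma exists_mem_pair_neg_angle_le_arcsin {x v : V} {t : ℝ} (h : sin (angle x v) ≤ t) :
    ∃ s ∈ ({x, -x} : Set V), angle s v ≤ arcsin t := by
  rcases le_arcsin_or_pi_sub_le_arcsin_of_sin_le (angle_nonneg x v) (angle_le_pi x v) h with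
    hx | hnx
  · exact ⟨x, Set.mem_insert _ _, hx⟩
  · exact ⟨-x, Set.mem_insert_of_mem _ rfl, by rwa [angle_neg_left]⟩

lemma le_angle_of_mem_pair_neg {x y s s' : V} {γ : ℝ} (hγπ : γ ≤ π / 2)
    (hγ : angle x y = γ ∨ angle x y = π - γ) (hs : s ∈ ({x, -x} : Set V))
    (hs' : s' ∈ ({y, -y} : Set V)) : γ ≤ angle s s' := by
  rcases hs with rfl | rfl <;> rcases hs' with rfl | rfl <;> rcases hγ with h | h <;>
    simp only [angle_neg_left, angle_neg_right, h] <;> linarith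

end Angle

section Corridor

variable {V P : Type*} [NormedAddCommGroup V] [InnerProductSpace ℝ V] [MetricSpace P]
  [NormedAddTorsor V P]

lemma AffineSubspace.infDist_vsub_direction_le {L : AffineSubspace ℝ P}
    (hL : (L : Set P).Nonempty) (p q : P) :
    infDist (q -ᵥ p) L.direction ≤ infDist p L + infDist q L := by
  rw [← sub_le_iff_le_add, le_infDist hL]
  intro a ha
  have htranslate : infDist (q -ᵥ a) L.direction = infDist q L := by
    rw [AffineSubspace.coe_direction_eq_vsub_set_right ha,
      ← AffineIsometryEquiv.coe_vaddConst_symm (𝕜 := ℝ) a]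
    exact infDist_image (AffineIsometryEquiv.vaddConst ℝ a).symm.isometry
  have := infDist_le_infDist_add_dist (x := q -ᵥ p) (y := q -ᵥ a) (s := (L.direction : Set V))
  rw [htranslate, dist_vsub_cancel_left] at this
  linarith

lemma AffineSubspace.nonempty_of_finrank_direction_eq_one {L : AffineSubspace ℝ P}
    (hL : Module.finrank ℝ L.direction = 1) : (L : Set P).Nonempty := by
  rw [AffineSubspace.nonempty_iff_ne_bot]
  rintro rfl
  rw [AffineSubspace.direction_bot, finrank_bot] at hL
  exact zero_ne_one hL

lemma AffineSubspace.direction_eq_span_singleton {L : AffineSubspace ℝ P}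
    (hL : Module.finrank ℝ L.direction = 1) {d : V} (hd : d ∈ L.direction) (hd0 : d ≠ 0) :
    L.direction = ℝ ∙ d := by
  have : FiniteDimensional ℝ L.direction := Module.finite_of_finrank_eq_succ hL
  exact (Submodule.eq_of_le_of_finrank_eq ((Submodule.span_singleton_le_iff_mem _ _).2 hd)
    (by rw [finrank_span_singleton hd0, hL])).symm

lemma dist_mul_sin_angle_le_infDist_add_infDist {L : AffineSubspace ℝ P}
    (hL : Module.finrank ℝ L.direction = 1) {d : V} (hd : d ∈ L.direction) (hd0 : d ≠ 0)
    (p q : P) : dist p q * sin (angle d (q -ᵥ p)) ≤ infDist p L + infDist q L :=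
  calc dist p q * sin (angle d (q -ᵥ p)) = ‖q -ᵥ p‖ * sin (angle (q -ᵥ p) d) := by
        rw [dist_comm, dist_eq_norm_vsub V, angle_comm]
    _ ≤ infDist (q -ᵥ p) (ℝ ∙ d) := norm_mul_sin_angle_le_infDist_span_singleton _ hd0
    _ = infDist (q -ᵥ p) L.direction := by rw [L.direction_eq_span_singleton hL hd hd0]
    _ ≤ infDist p L + infDist q L :=
        L.infDist_vsub_direction_le (L.nonempty_of_finrank_direction_eq_one hL) p q

end Corridor

theorem angle_le_of_unit_segment_in_two_corridors_general
    (w : ℝ)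
    (L₁ L₂ : AffineSubspace ℝ E2)
    (hL₁ : Module.finrank ℝ L₁.direction = 1)
    (hL₂ : Module.finrank ℝ L₂.direction = 1)
    (d₁ d₂ : E2) (hd₁ : d₁ ∈ L₁.direction) (hd₁0 : d₁ ≠ 0)
    (hd₂ : d₂ ∈ L₂.direction) (hd₂0 : d₂ ≠ 0)
    (γ : ℝ) (hγπ : γ ≤ π / 2)
    (hγ : InnerProductGeometry.angle d₁ d₂ = γ ∨ InnerProductGeometry.angle d₁ d₂ = π - γ)
    (p q : E2) (hpq : dist p q = 1)
    (hp₁ : Metric.infDist p (L₁ : Set E2) ≤ w) (hp₂ : Metric.infDist p (L₂ : Set E2) ≤ w)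
    (hq₁ : Metric.infDist q (L₁ : Set E2) ≤ w) (hq₂ : Metric.infDist q (L₂ : Set E2) ≤ w) :
    γ ≤ 2 * arcsin (2 * w) := by
  have h₁ := dist_mul_sin_angle_le_infDist_add_infDist hL₁ hd₁ hd₁0 p q
  have h₂ := dist_mul_sin_angle_le_infDist_add_infDist hL₂ hd₂ hd₂0 p q
  rw [hpq, one_mul] at h₁ h₂
  obtain ⟨s₁, hs₁, hs₁v⟩ := exists_mem_pair_neg_angle_le_arcsin (t := 2 * w)
    (h₁.trans (by linarith))
  obtain ⟨s₂, hs₂, hs₂v⟩ := exists_mem_pair_neg_angle_le_arcsin (t := 2 * w)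
    (h₂.trans (by linarith))
  calc γ ≤ angle s₁ s₂ := le_angle_of_mem_pair_neg hγπ hγ hs₁ hs₂
    _ ≤ angle s₁ (q -ᵥ p) + angle (q -ᵥ p) s₂ := angle_le_angle_add_angle _ _ _
    _ ≤ 2 * arcsin (2 * w) := by rw [angle_comm (q -ᵥ p)]; linarith

/-- Let `0 ≤ w < 1/2`, let `L₁`, `L₂` be lines (one-dimensional affine
subspaces) of `ℝ²`, and let `γ ∈ [0, π/2]` be the angle between the direction of `L₁`
and the direction of `L₂` (so for direction vectors `d₁`, `d₂` of the lines, the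
vector angle `∠(d₁, d₂) ∈ [0, π]` equals `γ` or `π − γ`).  If `p, q ∈ ℝ²` satisfy
`dist p q = 1` and each of `p`, `q` lies within distance `w` of `L₁` and of `L₂`,
then `γ ≤ 2·arcsin(2w)`. -/
theorem angle_le_of_unit_segment_in_two_corridors
    (w : ℝ) (hw0 : 0 ≤ w) (hw : w < 1 / 2)
    (L₁ L₂ : AffineSubspace ℝ E2)
    (hL₁ : Module.finrank ℝ L₁.direction = 1)
    (hL₂ : Module.finrank ℝ L₂.direction = 1)
    (d₁ d₂ : E2) (hd₁ : d₁ ∈ L₁.direction) (hd₁0 : d₁ ≠ 0)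
    (hd₂ : d₂ ∈ L₂.direction) (hd₂0 : d₂ ≠ 0)
    (γ : ℝ) (hγ0 : 0 ≤ γ) (hγπ : γ ≤ π / 2)
    (hγ : InnerProductGeometry.angle d₁ d₂ = γ ∨ InnerProductGeometry.angle d₁ d₂ = π - γ)
    (p q : E2) (hpq : dist p q = 1)
    (hp₁ : Metric.infDist p (L₁ : Set E2) ≤ w) (hp₂ : Metric.infDist p (L₂ : Set E2) ≤ w)
    (hq₁ : Metric.infDist q (L₁ : Set E2) ≤ w) (hq₂ : Metric.infDist q (L₂ : Set E2) ≤ w) :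
    γ ≤ 2 * arcsin (2 * w) :=
  angle_le_of_unit_segment_in_two_corridors_general w L₁ L₂ hL₁ hL₂ d₁ d₂ hd₁ hd₁0 hd₂ hd₂0 γ hγπ hγ
    p q hpq hp₁ hp₂ hq₁ hq₂
end
end

section
/- Let a, b ∈ ℝ² with dist(a, b) = 1 and with the closed segment [a, b] contained in the tunnel T. If a ∈ Q1((0,0), ε), then b ∈ Q4((0.8, 0.6), ε); and if a ∈ Q4((0, 0.6), ε), then b ∈ Q1((0.8, 0), ε). -/
noncomputable section

open Set

/-- The point of `ℝ²` with coordinates `x` and `y`. -/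
def pt (x y : ℝ) : E2 := (WithLp.equiv 2 (Fin 2 → ℝ)).symm ![x, y]

/-- Piecewise-linear interpolation through a list of breakpoints `(xᵢ, yᵢ)`
(with strictly increasing `xᵢ`), evaluated at `x`. -/
def pl : List (ℝ × ℝ) → ℝ → ℝ
  | [], _ => 0
  | [(_, y₀)], _ => y₀
  | (x₀, y₀) :: (x₁, y₁) :: rest, x =>
      if x ≤ x₁ then y₀ + (y₁ - y₀) * (x - x₀) / (x₁ - x₀)
      else pl ((x₁, y₁) :: rest) x

/-- The quadrant area `Q1(c, r)`: points of the closed disc of radius `r` around `c`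
that lie (weakly) to the upper right of `c`. -/
def Q1 (c : E2) (r : ℝ) : Set E2 := {p | dist p c ≤ r ∧ c 0 ≤ p 0 ∧ c 1 ≤ p 1}

/-- The quadrant area `Q2(c, r)` (upper left). -/
def Q2 (c : E2) (r : ℝ) : Set E2 := {p | dist p c ≤ r ∧ p 0 ≤ c 0 ∧ c 1 ≤ p 1}

/-- The quadrant area `Q3(c, r)` (lower left). -/
def Q3 (c : E2) (r : ℝ) : Set E2 := {p | dist p c ≤ r ∧ p 0 ≤ c 0 ∧ p 1 ≤ c 1}

/-- The quadrant area `Q4(c, r)` (lower right). -/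
def Q4 (c : E2) (r : ℝ) : Set E2 := {p | dist p c ≤ r ∧ c 0 ≤ p 0 ∧ p 1 ≤ c 1}

/-- The breakpoints of the lower boundary polyline of the tunnel (here `ε' = ε/2`). -/
def tunnelLowerPts (ε : ℝ) : List (ℝ × ℝ) :=
  [(0, 0), (ε / 2, 0), (0.4, 0.3 - ε / 2), (0.8 - ε / 2, 0), (0.8, 0),
   (0.8 + ε / 2, 0), (1.2, 0.3 - ε / 2), (1.6 - ε / 2, 0), (1.6, 0)]

/-- The breakpoints of the upper boundary polyline of the tunnel (here `ε' = ε/2`). -/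
def tunnelUpperPts (ε : ℝ) : List (ℝ × ℝ) :=
  [(0, 0.6), (ε / 2, 0.6), (0.4, 0.3 + ε / 2), (0.8 - ε / 2, 0.6), (0.8, 0.6),
   (0.8 + ε / 2, 0.6), (1.2, 0.3 + ε / 2), (1.6 - ε / 2, 0.6), (1.6, 0.6)]

/-- Obstacle OT1: the triangle with vertices `(0, ε')`, `(0.4 − ε', 0.3)`, `(0, 0.6 − ε')`. -/
def OT1 (ε : ℝ) : Set E2 :=
  convexHull ℝ {pt 0 (ε / 2), pt (0.4 - ε / 2) 0.3, pt 0 (0.6 - ε / 2)}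

/-- Obstacle OT2: the rhombus with vertices `(0.4 + ε', 0.3)`, `(0.8, ε')`,
`(1.2 − ε', 0.3)`, `(0.8, 0.6 − ε')`. -/
def OT2 (ε : ℝ) : Set E2 :=
  convexHull ℝ {pt (0.4 + ε / 2) 0.3, pt 0.8 (ε / 2), pt (1.2 - ε / 2) 0.3, pt 0.8 (0.6 - ε / 2)}

/-- Obstacle OT3: the triangle with vertices `(1.6, ε')`, `(1.2 + ε', 0.3)`, `(1.6, 0.6 − ε')`. -/
def OT3 (ε : ℝ) : Set E2 :=
  convexHull ℝ {pt 1.6 (ε / 2), pt (1.2 + ε / 2) 0.3, pt 1.6 (0.6 - ε / 2)}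

/-- The tunnel `T`: the closed region between the lower and upper sawtooth polylines
over `0 ≤ x ≤ 1.6`, with the interiors of the three obstacles OT1, OT2, OT3 removed. -/
def tunnel (ε : ℝ) : Set E2 :=
  {p | 0 ≤ p 0 ∧ p 0 ≤ 1.6 ∧
      pl (tunnelLowerPts ε) (p 0) ≤ p 1 ∧ p 1 ≤ pl (tunnelUpperPts ε) (p 0)} \
    (interior (OT1 ε) ∪ interior (OT2 ε) ∪ interior (OT3 ε))

@[local simp] lemma pt_apply0 (x y : ℝ) : pt x y 0 = x := rfl
@[local simp] lemma pt_apply1 (x y : ℝ) : pt x y 1 = y := rfl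

lemma e2_ext (p q : E2) (h0 : p 0 = q 0) (h1 : p 1 = q 1) : p = q := by
  ext i; fin_cases i; exacts [h0, h1]

lemma dist_coord (p q : E2) : dist p q = Real.sqrt ((p 0 - q 0)^2 + (p 1 - q 1)^2) := by
  simp [EuclideanSpace.dist_eq, Fin.sum_univ_two, Real.dist_eq, sq_abs]

set_option maxHeartbeats 1000000 in
lemma mem_interior_OT2 {ε : ℝ} (hε0 : 0 < ε) (hε : ε ≤ 1/100) (p : E2)
    (hp0 : p 0 = 0.8) (h1 : ε/2 < p 1) (h2 : p 1 < 0.6 - ε/2) :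
    p ∈ interior (OT2 ε) := by
  have hconv : Convex ℝ (OT2 ε) := convex_convexHull ℝ _
  have hsub : {pt (0.4 + ε / 2) 0.3, pt 0.8 (ε / 2), pt (1.2 - ε / 2) 0.3,
      pt 0.8 (0.6 - ε / 2)} ⊆ OT2 ε := subset_convexHull ℝ _
  have hL : pt (0.4 + ε/2) 0.3 ∈ OT2 ε := hsub (by left; rfl)
  have hB : pt 0.8 (ε/2) ∈ OT2 ε := hsub (by right; left; rfl)
  have hR : pt (1.2 - ε/2) 0.3 ∈ OT2 ε := hsub (by right; right; left; rfl)
  have hT : pt 0.8 (0.6 - ε/2) ∈ OT2 ε := hsub (by right; right; right; rfl)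
  have hden1 : (0:ℝ) < 0.4 - ε/2 := by linarith
  have hden2 : (0:ℝ) < 0.3 - ε/2 := by linarith
  have hne1 : (4/5 - ε : ℝ) ≠ 0 := by intro h; rw [sub_eq_zero] at h; linarith
  have hne2 : (3/5 - ε : ℝ) ≠ 0 := by intro h; rw [sub_eq_zero] at h; linarith
  have hball : Metric.ball (pt 0.8 0.3) (1/100) ⊆ OT2 ε := by
    intro q hq
    rw [Metric.mem_ball, dist_coord] at hq
    have hq' : (q 0 - 0.8)^2 + (q 1 - 0.3)^2 < (1/100)^2 := by
      have h100 : (0:ℝ) < 1/100 := by norm_num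
      have := (Real.sqrt_lt' h100).1 (by simpa using hq)
      simpa using this
    have hdx1 : q 0 - 0.8 ≤ 1/100 := by
      nlinarith [sq_nonneg (q 1 - 0.3), sq_nonneg (q 0 - 0.8 - 1/100)]
    have hdx2 : -(1/100) ≤ q 0 - 0.8 := by
      nlinarith [sq_nonneg (q 1 - 0.3), sq_nonneg (q 0 - 0.8 + 1/100)]
    have hdy1 : q 1 - 0.3 ≤ 1/100 := by
      nlinarith [sq_nonneg (q 0 - 0.8), sq_nonneg (q 1 - 0.3 - 1/100)]
    have hdy2 : -(1/100) ≤ q 1 - 0.3 := by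
      nlinarith [sq_nonneg (q 0 - 0.8), sq_nonneg (q 1 - 0.3 + 1/100)]
    set μ : ℝ := 1/2 + (q 0 - 0.8)/(0.4 - ε/2) with hμ
    set ν : ℝ := 1/2 + (q 1 - 0.3)/(0.3 - ε/2) with hν
    have hμ0 : 0 ≤ μ := by
      have : -(1/2 : ℝ) ≤ (q 0 - 0.8)/(0.4 - ε/2) := by
        rw [le_div_iff₀ hden1]; linarith
      simp only [hμ]; linarith
    have hμ1 : μ ≤ 1 := by
      have : (q 0 - 0.8)/(0.4 - ε/2) ≤ 1/2 := by
        rw [div_le_iff₀ hden1]; linarith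
      simp only [hμ]; linarith
    have hν0 : 0 ≤ ν := by
      have : -(1/2 : ℝ) ≤ (q 1 - 0.3)/(0.3 - ε/2) := by
        rw [le_div_iff₀ hden2]; linarith
      simp only [hν]; linarith
    have hν1 : ν ≤ 1 := by
      have : (q 1 - 0.3)/(0.3 - ε/2) ≤ 1/2 := by
        rw [div_le_iff₀ hden2]; linarith
      simp only [hν]; linarith
    have hq1m : (1 - μ) • pt (0.4 + ε/2) 0.3 + μ • pt (1.2 - ε/2) 0.3 ∈ OT2 ε :=
      hconv hL hR (by linarith) (by linarith) (by ring)
    have hq2m : (1 - ν) • pt 0.8 (ε/2) + ν • pt 0.8 (0.6 - ε/2) ∈ OT2 ε :=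
      hconv hB hT (by linarith) (by linarith) (by ring)
    have hqe : q = (1/2 : ℝ) • ((1 - μ) • pt (0.4 + ε/2) 0.3 + μ • pt (1.2 - ε/2) 0.3)
        + (1/2 : ℝ) • ((1 - ν) • pt 0.8 (ε/2) + ν • pt 0.8 (0.6 - ε/2)) := by
      have hk1 : (q 0 - 0.8)/(0.4 - ε/2) * (0.4 - ε/2) = q 0 - 0.8 :=
        div_mul_cancel₀ _ hden1.ne'
      have hk2 : (q 1 - 0.3)/(0.3 - ε/2) * (0.3 - ε/2) = q 1 - 0.3 :=
        div_mul_cancel₀ _ hden2.ne'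
      apply e2_ext
      · simp only [PiLp.add_apply, PiLp.smul_apply, smul_eq_mul, pt_apply0, hμ]
        linear_combination -hk1
      · simp only [PiLp.add_apply, PiLp.smul_apply, smul_eq_mul, pt_apply1, hν]
        linear_combination -hk2
    rw [hqe]
    exact hconv hq1m hq2m (by norm_num) (by norm_num) (by norm_num)
  have hc : pt 0.8 0.3 ∈ interior (OT2 ε) :=
    mem_interior.2 ⟨_, hball, Metric.isOpen_ball, Metric.mem_ball_self (by norm_num)⟩
  rcases le_or_gt (p 1) 0.3 with hy | hy
  · set α : ℝ := (p 1 - ε/2)/(0.3 - ε/2) with hα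
    have hα0 : 0 < α := div_pos (by linarith) hden2
    have hα1 : α ≤ 1 := by rw [hα, div_le_one hden2]; linarith
    have hpe : p = α • pt 0.8 0.3 + (1 - α) • pt 0.8 (ε/2) := by
      have hk3 : (p 1 - ε/2)/(0.3 - ε/2) * (0.3 - ε/2) = p 1 - ε/2 :=
        div_mul_cancel₀ _ hden2.ne'
      apply e2_ext
      · simp only [PiLp.add_apply, PiLp.smul_apply, smul_eq_mul, pt_apply0]
        rw [hp0]; ring
      · simp only [PiLp.add_apply, PiLp.smul_apply, smul_eq_mul, pt_apply1, hα]
        linear_combination -hk3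
    rw [hpe]
    exact hconv.combo_interior_self_mem_interior hc hB hα0 (by linarith) (by ring)
  · set α : ℝ := (0.6 - ε/2 - p 1)/(0.3 - ε/2) with hα
    have hα0 : 0 < α := div_pos (by linarith) hden2
    have hα1 : α ≤ 1 := by rw [hα, div_le_one hden2]; linarith
    have hpe : p = α • pt 0.8 0.3 + (1 - α) • pt 0.8 (0.6 - ε/2) := by
      have hk4 : (0.6 - ε/2 - p 1)/(0.3 - ε/2) * (0.3 - ε/2) = 0.6 - ε/2 - p 1 :=
        div_mul_cancel₀ _ hden2.ne'
      apply e2_ext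
      · simp only [PiLp.add_apply, PiLp.smul_apply, smul_eq_mul, pt_apply0]
        rw [hp0]; ring
      · simp only [PiLp.add_apply, PiLp.smul_apply, smul_eq_mul, pt_apply1, hα]
        linear_combination hk4
    rw [hpe]
    exact hconv.combo_interior_self_mem_interior hc hT hα0 (by linarith) (by ring)

lemma piece_nonneg {x0 x1 y0 y1 x : ℝ} (h : 0 < x1 - x0) (hx0 : x0 ≤ x) (hx1 : x ≤ x1)
    (h0 : 0 ≤ y0) (h1 : 0 ≤ y1) : 0 ≤ y0 + (y1 - y0) * (x - x0) / (x1 - x0) := by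
  have ht0 : 0 ≤ (x - x0) / (x1 - x0) := div_nonneg (by linarith) h.le
  have ht1 : (x - x0) / (x1 - x0) ≤ 1 := (div_le_one h).2 (by linarith)
  rw [mul_div_assoc]
  nlinarith [mul_nonneg h0 (by linarith : (0:ℝ) ≤ 1 - (x - x0) / (x1 - x0)), mul_nonneg h1 ht0]

lemma pl_lower_nonneg {ε x : ℝ} (hε0 : 0 < ε) (hε : ε ≤ 1/100) (hx : 0 ≤ x) :
    0 ≤ pl (tunnelLowerPts ε) x := by
  simp only [tunnelLowerPts, pl]
  split_ifs <;>
    first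
      | (apply piece_nonneg <;> linarith)
      | norm_num

lemma pl_upper_eq (ε x : ℝ) : pl (tunnelUpperPts ε) x = 0.6 - pl (tunnelLowerPts ε) x := by
  simp only [tunnelUpperPts, tunnelLowerPts, pl]
  split_ifs <;> ring

lemma pl_lower_04 {ε : ℝ} (hε0 : 0 < ε) (hε : ε ≤ 1/100) :
    pl (tunnelLowerPts ε) 0.4 = 0.3 - ε/2 := by
  have h1 : ¬((0.4:ℝ) ≤ ε/2) := by norm_num; linarith
  simp only [tunnelLowerPts, pl, if_neg h1, if_pos (le_refl (0.4:ℝ))]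
  rw [mul_div_assoc, div_self (by norm_num; linarith), mul_one]
  ring

lemma scalar_core {ε a0 a1 b0 b1 r1 : ℝ} (hε0 : 0 < ε) (hε : ε ≤ 1/100)
    (ha00 : 0 ≤ a0) (ha0 : a0 ≤ ε) (ha1 : a1 ≤ ε)
    (hb0 : 0.8 ≤ b0) (hb1 : b1 ≤ 0.6)
    (hr1 : 0.6 - ε/2 ≤ r1)
    (hkey : (b1 - a1) * (0.8 - a0) = (r1 - a1) * (b0 - a0)) :
    (b0 - 0.8)^2 + (b1 - 0.6)^2 ≤ ε^2 := by
  have hs : 0 ≤ b0 - 0.8 := by linarith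
  have hra : 0.58 ≤ r1 - a1 := by linarith
  have hkey2 : (b1 - r1) * (0.8 - a0) = (r1 - a1) * (b0 - 0.8) := by linear_combination hkey
  have h3 : 0 ≤ (b1 - r1) * (0.8 - a0) := hkey2 ▸ mul_nonneg (by linarith) hs
  have hbr0 : 0 ≤ b1 - r1 := by nlinarith
  have hstep : 0.7 * (b0 - 0.8) ≤ b1 - r1 := by
    have e1 : 0.58 * (b0 - 0.8) ≤ (r1 - a1) * (b0 - 0.8) := mul_le_mul_of_nonneg_right hra hs
    have e2 : (b1 - r1) * (0.8 - a0) ≤ (b1 - r1) * 0.8 :=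
      mul_le_mul_of_nonneg_left (by linarith) hbr0
    linarith
  have hh0 : 0 ≤ 0.6 - b1 := by linarith
  have hA : 0.6 - b1 ≤ ε/2 - 0.7 * (b0 - 0.8) := by linarith
  have hD : 0.7 * (b0 - 0.8) ≤ ε/2 := by linarith
  have h1 : (0.6 - b1)^2 ≤ (ε/2 - 0.7*(b0-0.8))^2 := by
    apply pow_le_pow_left₀ hh0 hA
  have f1 := mul_le_mul_of_nonneg_right hD hs
  have f2 := mul_le_mul_of_nonneg_right hD hε0.le
  nlinarith [h1, f1, f2, mul_nonneg hε0.le hs]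
set_option maxHeartbeats 8000000 in
/-- a unit-length edge whose segment lies inside the tunnel and whose
first endpoint lies in the entrance area `Q1((0,0), ε)` (resp. `Q4((0,0.6), ε)`) has
its second endpoint in `Q4((0.8,0.6), ε)` (resp. `Q1((0.8,0), ε)`). -/
theorem tunnel_single_edge_step (ε : ℝ) (hε0 : 0 < ε) (hε : ε ≤ 1 / 100)
    (a b : E2) (hab : dist a b = 1) (hseg : segment ℝ a b ⊆ tunnel ε) :
    (a ∈ Q1 (pt 0 0) ε → b ∈ Q4 (pt 0.8 0.6) ε) ∧
    (a ∈ Q4 (pt 0 0.6) ε → b ∈ Q1 (pt 0.8 0) ε) := by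
  obtain ⟨⟨ha00, ha016, hal, hau⟩, -⟩ := hseg (left_mem_segment ℝ a b)
  obtain ⟨⟨hb00, hb016, hbl, hbu⟩, -⟩ := hseg (right_mem_segment ℝ a b)
  have hb1low : 0 ≤ b 1 := le_trans (pl_lower_nonneg hε0 hε hb00) hbl
  have hb1up : b 1 ≤ 0.6 := by
    rw [pl_upper_eq] at hbu
    have := pl_lower_nonneg hε0 hε hb00
    linarith
  have ha1low : 0 ≤ a 1 := le_trans (pl_lower_nonneg hε0 hε ha00) hal
  have ha1up : a 1 ≤ 0.6 := by
    rw [pl_upper_eq] at hau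
    have := pl_lower_nonneg hε0 hε ha00
    linarith
  have hdist : (a 0 - b 0)^2 + (a 1 - b 1)^2 = 1 := by
    have h := hab
    rw [dist_coord] at h
    have h2 := congrArg (· ^ 2) h
    simp only at h2
    rwa [Real.sq_sqrt (by positivity), one_pow] at h2
  constructor
  · -- case 1
    rintro ⟨haq, hax, hay⟩
    have ha0 : 0 ≤ a 0 := hax
    have ha1 : 0 ≤ a 1 := hay
    have haqs : (a 0)^2 + (a 1)^2 ≤ ε^2 := by
      rw [dist_coord] at haq
      simp only [pt_apply0, pt_apply1, sub_zero] at haq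
      have h2 := pow_le_pow_left₀ (Real.sqrt_nonneg _) haq 2
      rwa [Real.sq_sqrt (by positivity)] at h2
    have ha0' : a 0 ≤ ε := by nlinarith [sq_nonneg (a 1)]
    have ha1' : a 1 ≤ ε := by nlinarith [sq_nonneg (a 0)]
    have hb08 : 0.8 + a 0 ≤ b 0 := by
      have hsq1 : 0.64 ≤ (b 0 - a 0)^2 := by
        nlinarith [mul_nonneg (by linarith : (0:ℝ) ≤ 0.6 - (a 1 - b 1))
          (by linarith : (0:ℝ) ≤ 0.6 + (a 1 - b 1))]
      have h08 : 0.8 ≤ b 0 - a 0 := by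
        nlinarith [hsq1, (by linarith : (0:ℝ) < b 0 - a 0 + 0.8)]
      linarith
    have hbne : 0 < b 0 - a 0 := by linarith
    set tq : ℝ := (0.4 - a 0)/(b 0 - a 0) with htq
    set tr : ℝ := (0.8 - a 0)/(b 0 - a 0) with htr
    have htq0 : 0 ≤ tq := div_nonneg (by linarith) hbne.le
    have htq1 : tq ≤ 1 := (div_le_one hbne).2 (by linarith)
    have htr0 : 0 ≤ tr := div_nonneg (by linarith) hbne.le
    have htr1 : tr ≤ 1 := (div_le_one hbne).2 (by linarith)
    have htqr : tq ≤ tr := by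
      rw [htq, htr, div_le_div_iff_of_pos_right hbne]
      linarith
    have hqmem : a + tq • (b - a) ∈ tunnel ε :=
      hseg (by rw [segment_eq_image']; exact ⟨tq, ⟨htq0, htq1⟩, rfl⟩)
    have hrmem : a + tr • (b - a) ∈ tunnel ε :=
      hseg (by rw [segment_eq_image']; exact ⟨tr, ⟨htr0, htr1⟩, rfl⟩)
    have hq0 : (a + tq • (b - a)) 0 = 0.4 := by
      simp only [PiLp.add_apply, PiLp.smul_apply, PiLp.sub_apply, smul_eq_mul, htq]
      rw [div_mul_cancel₀ _ hbne.ne']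
      ring
    have hq1 : (a + tq • (b - a)) 1 = a 1 + tq * (b 1 - a 1) := by
      simp only [PiLp.add_apply, PiLp.smul_apply, PiLp.sub_apply, smul_eq_mul]
    have hr0 : (a + tr • (b - a)) 0 = 0.8 := by
      simp only [PiLp.add_apply, PiLp.smul_apply, PiLp.sub_apply, smul_eq_mul, htr]
      rw [div_mul_cancel₀ _ hbne.ne']
      ring
    have hr1 : (a + tr • (b - a)) 1 = a 1 + tr * (b 1 - a 1) := by
      simp only [PiLp.add_apply, PiLp.smul_apply, PiLp.sub_apply, smul_eq_mul]
    obtain ⟨⟨-, -, hql, -⟩, -⟩ := hqmem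
    rw [hq0, hq1, pl_lower_04 hε0 hε] at hql
    obtain ⟨⟨-, -, -, hru⟩, hrO⟩ := hrmem
    rw [hr0, hr1, pl_upper_eq] at hru
    have hru' : a 1 + tr * (b 1 - a 1) ≤ 0.6 := by
      have := pl_lower_nonneg hε0 hε (by norm_num : (0:ℝ) ≤ 0.8)
      linarith
    have hrO2 : a + tr • (b - a) ∉ interior (OT2 ε) := fun hmem =>
      hrO (Set.mem_union_left _ (Set.mem_union_right _ hmem))
    have hr1ge : 0.6 - ε/2 ≤ a 1 + tr * (b 1 - a 1) := by
      by_contra hcon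
      push_neg at hcon
      have hrle : a 1 + tr * (b 1 - a 1) ≤ ε/2 := by
        by_contra hcon2
        push_neg at hcon2
        exact hrO2 (mem_interior_OT2 hε0 hε _ hr0 (by rw [hr1]; exact hcon2)
          (by rw [hr1]; exact hcon))
      rcases le_or_gt 0 (b 1 - a 1) with hba | hba
      · have : tq * (b 1 - a 1) ≤ tr * (b 1 - a 1) := mul_le_mul_of_nonneg_right htqr hba
        linarith
      · have : tq * (b 1 - a 1) ≤ 0 := mul_nonpos_of_nonneg_of_nonpos htq0 hba.le
        linarith
    have hk : tr * (b 0 - a 0) = 0.8 - a 0 := by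
      rw [htr]; exact div_mul_cancel₀ _ hbne.ne'
    have hkey : (b 1 - a 1) * (0.8 - a 0) = ((a 1 + tr * (b 1 - a 1)) - a 1) * (b 0 - a 0) := by
      linear_combination (-(b 1 - a 1)) * hk
    have hfinal : (b 0 - 0.8)^2 + (b 1 - 0.6)^2 ≤ ε^2 :=
      scalar_core hε0 hε ha0 ha0' ha1' (by linarith) hb1up hr1ge hkey
    refine ⟨?_, by show (0.8:ℝ) ≤ b 0; linarith, hb1up⟩
    rw [dist_coord]
    simp only [pt_apply0, pt_apply1]
    have h2 := Real.sqrt_le_sqrt hfinal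
    rwa [Real.sqrt_sq hε0.le] at h2
  · -- case 2
    rintro ⟨haq, hax, hay⟩
    have ha0 : 0 ≤ a 0 := hax
    have haqs : (a 0)^2 + (a 1 - 0.6)^2 ≤ ε^2 := by
      rw [dist_coord] at haq
      simp only [pt_apply0, pt_apply1, sub_zero] at haq
      have h2 := pow_le_pow_left₀ (Real.sqrt_nonneg _) haq 2
      rwa [Real.sq_sqrt (by positivity)] at h2
    have ha0' : a 0 ≤ ε := by nlinarith [sq_nonneg (a 1 - 0.6)]
    have ha1' : 0.6 - ε ≤ a 1 := by nlinarith [sq_nonneg (a 0)]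
    have hb08 : 0.8 + a 0 ≤ b 0 := by
      have hsq1 : 0.64 ≤ (b 0 - a 0)^2 := by
        nlinarith [mul_nonneg (by linarith : (0:ℝ) ≤ 0.6 - (a 1 - b 1))
          (by linarith : (0:ℝ) ≤ 0.6 + (a 1 - b 1))]
      have h08 : 0.8 ≤ b 0 - a 0 := by
        nlinarith [hsq1, (by linarith : (0:ℝ) < b 0 - a 0 + 0.8)]
      linarith
    have hbne : 0 < b 0 - a 0 := by linarith
    set tq : ℝ := (0.4 - a 0)/(b 0 - a 0) with htq
    set tr : ℝ := (0.8 - a 0)/(b 0 - a 0) with htr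
    have htq0 : 0 ≤ tq := div_nonneg (by linarith) hbne.le
    have htq1 : tq ≤ 1 := (div_le_one hbne).2 (by linarith)
    have htr0 : 0 ≤ tr := div_nonneg (by linarith) hbne.le
    have htr1 : tr ≤ 1 := (div_le_one hbne).2 (by linarith)
    have htqr : tq ≤ tr := by
      rw [htq, htr, div_le_div_iff_of_pos_right hbne]
      linarith
    have hqmem : a + tq • (b - a) ∈ tunnel ε :=
      hseg (by rw [segment_eq_image']; exact ⟨tq, ⟨htq0, htq1⟩, rfl⟩)
    have hrmem : a + tr • (b - a) ∈ tunnel ε :=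
      hseg (by rw [segment_eq_image']; exact ⟨tr, ⟨htr0, htr1⟩, rfl⟩)
    have hq0 : (a + tq • (b - a)) 0 = 0.4 := by
      simp only [PiLp.add_apply, PiLp.smul_apply, PiLp.sub_apply, smul_eq_mul, htq]
      rw [div_mul_cancel₀ _ hbne.ne']
      ring
    have hq1 : (a + tq • (b - a)) 1 = a 1 + tq * (b 1 - a 1) := by
      simp only [PiLp.add_apply, PiLp.smul_apply, PiLp.sub_apply, smul_eq_mul]
    have hr0 : (a + tr • (b - a)) 0 = 0.8 := by
      simp only [PiLp.add_apply, PiLp.smul_apply, PiLp.sub_apply, smul_eq_mul, htr]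
      rw [div_mul_cancel₀ _ hbne.ne']
      ring
    have hr1 : (a + tr • (b - a)) 1 = a 1 + tr * (b 1 - a 1) := by
      simp only [PiLp.add_apply, PiLp.smul_apply, PiLp.sub_apply, smul_eq_mul]
    obtain ⟨⟨-, -, -, hqu⟩, -⟩ := hqmem
    rw [hq0, hq1, pl_upper_eq, pl_lower_04 hε0 hε] at hqu
    obtain ⟨⟨-, -, hrl, -⟩, hrO⟩ := hrmem
    rw [hr0, hr1] at hrl
    have hrl' : 0 ≤ a 1 + tr * (b 1 - a 1) := by
      have := pl_lower_nonneg hε0 hε (by norm_num : (0:ℝ) ≤ 0.8)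
      linarith
    have hrO2 : a + tr • (b - a) ∉ interior (OT2 ε) := fun hmem =>
      hrO (Set.mem_union_left _ (Set.mem_union_right _ hmem))
    have hr1le : a 1 + tr * (b 1 - a 1) ≤ ε/2 := by
      by_contra hcon
      push_neg at hcon
      have hrge : 0.6 - ε/2 ≤ a 1 + tr * (b 1 - a 1) := by
        by_contra hcon2
        push_neg at hcon2
        exact hrO2 (mem_interior_OT2 hε0 hε _ hr0 (by rw [hr1]; exact hcon)
          (by rw [hr1]; exact hcon2))
      rcases le_or_gt 0 (b 1 - a 1) with hba | hba
      · have : 0 ≤ tq * (b 1 - a 1) := mul_nonneg htq0 hba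
        linarith
      · have : tr * (b 1 - a 1) ≤ tq * (b 1 - a 1) := by
          nlinarith
        linarith
    have hk : tr * (b 0 - a 0) = 0.8 - a 0 := by
      rw [htr]; exact div_mul_cancel₀ _ hbne.ne'
    have hkey : (b 1 - a 1) * (0.8 - a 0) = ((a 1 + tr * (b 1 - a 1)) - a 1) * (b 0 - a 0) := by
      linear_combination (-(b 1 - a 1)) * hk
    have hkey' : ((0.6 - b 1) - (0.6 - a 1)) * (0.8 - a 0)
        = ((0.6 - (a 1 + tr * (b 1 - a 1))) - (0.6 - a 1)) * (b 0 - a 0) := by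
      linear_combination -hkey
    have hfinal : (b 0 - 0.8)^2 + ((0.6 - b 1) - 0.6)^2 ≤ ε^2 := by
      refine scalar_core hε0 hε ha0 ha0' ?_ ?_ ?_ ?_ hkey' <;> linarith
    have hfinal' : (b 0 - 0.8)^2 + (b 1 - 0)^2 ≤ ε^2 := by
      have heq : ((0.6 - b 1) - 0.6)^2 = (b 1 - 0)^2 := by ring
      rwa [heq] at hfinal
    refine ⟨?_, by show (0.8:ℝ) ≤ b 0; linarith, hb1low⟩
    rw [dist_coord]
    simp only [pt_apply0, pt_apply1]
    have h2 := Real.sqrt_le_sqrt hfinal'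
    rwa [Real.sqrt_sq hε0.le] at h2
end
end
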